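/- arXiv:1708.08796 — 2 statements merged into one kernel-verified Lean document; each statement's English description precedes it below -/
import Mathlib

section
/- Let α ∈ (0,1] and c ∈ ℝ, and define K(t) = c·t^(α−1)/Γ(α) and R(t) = Σ_{n=0}^∞ (−1)^n c^(n+1) t^((n+1)α − 1)/Γ((n+1)α) for t > 0 (i.e., R(t) = c·t^(α−1)·E_{α,α}(−c·t^α), where E_{α,β}(z) = Σ_{n=0}^∞ z^n/Γ(αn+β) is the Mittag–Leffler function). Then the series defining R converges absolutely for every t > 0, R ∈ L¹_loc(ℝ₊, ℝ), and R is the resolvent of the second kind of K: (K*R)(t) = (R*K)(t) = K(t) − R(t) for every t > 0. -/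
/-!
Write `g β t = t ^ (β - 1) / Γ(β)`, so that `K = c g_α` and `R = Σ (-1)^n c^(n+1) g_{(n+1)α}`.
The Beta integral gives the semigroup law `g_u * g_v = g_{u+v}`, so convolving `R` termwise with
`g_α` shifts the series by one index, which is exactly `K * R = K - R`. Sum and integral may be
exchanged because the series of absolute values is again a Mittag-Leffler series
`Σ xⁿ / Γ(nα + β)`, which converges by the ratio test: log-convexity of `Γ` gives
`Γ(y + α) ≥ Γ(y) (y + α - 1)^α`. Local integrability of `R` is the same computation with `g_1 = 1`
in place of `g_α`, and `R * K = K * R` by the substitution `s ↦ t - s`.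
-/

open MeasureTheory Set
open Real Filter Topology

theorem Real.Gamma_add_one_sub_mul_rpow_le {x a : ℝ} (hx : 0 < x) (ha₀ : 0 ≤ a) (ha₁ : a ≤ 1) :
    Gamma (x + 1 - a) * x ^ a ≤ Gamma (x + 1) := by
  have hΓx := Gamma_pos_of_pos hx
  have hΓx₁ := Gamma_pos_of_pos (by linarith : 0 < x + 1)
  have hconv := convexOn_log_Gamma.2 (mem_Ioi.2 hx) (mem_Ioi.2 (by linarith : 0 < x + 1))
    ha₀ (sub_nonneg.2 ha₁) (add_sub_cancel a 1)
  have hlogΓ : log (Gamma x) = log (Gamma (x + 1)) - log x := by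
    rw [Gamma_add_one hx.ne', log_mul hx.ne' hΓx.ne']; ring
  rw [smul_eq_mul, smul_eq_mul, show a * x + (1 - a) * (x + 1) = x + 1 - a by ring] at hconv
  simp only [Function.comp_apply, smul_eq_mul, hlogΓ] at hconv
  have hΓ := Gamma_pos_of_pos (by linarith : 0 < x + 1 - a)
  rw [← log_le_log_iff (mul_pos hΓ (rpow_pos_of_pos hx a)) hΓx₁,
    log_mul hΓ.ne' (rpow_pos_of_pos hx a).ne', log_rpow hx]
  linarith

theorem summable_pow_div_Gamma_mul_add {α : ℝ} (hα : α ∈ Ioc 0 1) (β x : ℝ) :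
    Summable fun n : ℕ => x ^ n / Gamma (n * α + β) := by
  obtain ⟨hα₀, hα₁⟩ := hα
  have hlin : Tendsto (fun n : ℕ => n * α + β + α - 1) atTop atTop :=
    tendsto_atTop_add_const_right _ _ <| tendsto_atTop_add_const_right _ _ <|
      tendsto_atTop_add_const_right _ _ <|
        (tendsto_natCast_atTop_atTop).atTop_mul_const hα₀
  have hratio : Tendsto (fun n : ℕ => |x| * (n * α + β + α - 1) ^ (-α)) atTop (𝓝 0) := by
    simpa using ((tendsto_rpow_neg_atTop hα₀).comp hlin).const_mul |x|
  refine summable_of_ratio_norm_eventually_le (r := 1 / 2) (by norm_num) ?_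
  filter_upwards [hratio.eventually (ge_mem_nhds (by norm_num : (0 : ℝ) < 1 / 2)),
    hlin.eventually_gt_atTop 0] with n hsmall hpos
  set y : ℝ := n * α + β
  have hy : 0 < y := by linarith
  have hΓ := Gamma_pos_of_pos hy
  have hgrowth : Gamma y * (y + α - 1) ^ α ≤ Gamma (y + α) := by
    simpa [show y + α - 1 + 1 - α = y by ring] using
      Gamma_add_one_sub_mul_rpow_le hpos hα₀.le hα₁
  rw [show ((n + 1 : ℕ) : ℝ) * α + β = y + α by push_cast; ring, norm_div, norm_div, norm_pow,
    norm_pow, pow_succ, norm_of_nonneg (Gamma_pos_of_pos (by linarith : 0 < y + α)).le,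
    norm_of_nonneg hΓ.le]
  calc ‖x‖ ^ n * ‖x‖ / Gamma (y + α)
      ≤ ‖x‖ ^ n * ‖x‖ / (Gamma y * (y + α - 1) ^ α) := by gcongr
    _ = |x| * (y + α - 1) ^ (-α) * (‖x‖ ^ n / Gamma y) := by
        rw [rpow_neg hpos.le, norm_eq_abs]; ring
    _ ≤ 1 / 2 * (‖x‖ ^ n / Gamma y) := by gcongr

theorem MeasureTheory.integrable_tsum_of_summable_integral_norm {α E : Type*} [MeasurableSpace α]
    {μ : Measure α} [NormedAddCommGroup E] [NormedSpace ℝ E] [CompleteSpace E] {F : ℕ → α → E}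
    (hF_int : ∀ n, Integrable (F n) μ) (hF_sum : Summable fun n ↦ ∫ a, ‖F n a‖ ∂μ) :
    Integrable (fun a ↦ ∑' n, F n a) μ := by
  have hlintegral : ∫⁻ a, ∑' n, ‖F n a‖ₑ ∂μ ≠ ⊤ := by
    rw [lintegral_tsum fun n ↦ (hF_int n).1.enorm]
    simp_rw [← ofReal_integral_norm_eq_lintegral_enorm (hF_int _)]
    rw [← ENNReal.ofReal_tsum_of_nonneg (fun n ↦ integral_nonneg fun _ ↦ norm_nonneg _) hF_sum]
    exact ENNReal.ofReal_ne_top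
  have hsummable : ∀ᵐ a ∂μ, Summable fun n ↦ ‖F n a‖ := by
    filter_upwards [ae_lt_top' (AEMeasurable.tsum fun n ↦ (hF_int n).1.enorm) hlintegral]
      with a ha
    exact tsum_enorm_ne_top_iff_summable_norm.1 ha.ne
  refine ⟨aestronglyMeasurable_of_tendsto_ae atTop
    (fun k ↦ Finset.aestronglyMeasurable_fun_sum (Finset.range k) fun n _ ↦ (hF_int n).1) ?_, ?_⟩
  · filter_upwards [hsummable] with a ha using ha.of_norm.hasSum.tendsto_sum_nat
  · exact (lintegral_mono fun a ↦ enorm_tsum_le_tsum_enorm).trans_lt hlintegral.lt_top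


theorem intervalIntegrable_rpow_mul_sub_rpow {t u v : ℝ} (ht : 0 < t) (hu : 0 < u) (hv : 0 < v) :
    IntervalIntegrable (fun s => s ^ (u - 1) * (t - s) ^ (v - 1)) volume 0 t := by
  have hleft : IntervalIntegrable (fun s : ℝ => s ^ (u - 1)) volume 0 (t / 2) :=
    intervalIntegral.intervalIntegrable_rpow' (by linarith)
  have hright : IntervalIntegrable (fun s : ℝ => (t - s) ^ (v - 1)) volume (t / 2) t := by
    simpa [show t - t / 2 = t / 2 by ring] using
      (intervalIntegral.intervalIntegrable_rpow' (a := t - t / 2) (b := t - t) (r := v - 1)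
        (by linarith)).comp_sub_left t
  refine (hleft.mul_continuousOn ?_).trans (hright.continuousOn_mul ?_)
  · refine (continuousOn_const.sub continuousOn_id).rpow_const fun s hs => Or.inl ?_
    rw [uIcc_of_le (by linarith)] at hs
    exact sub_ne_zero.2 (by linarith [hs.2] : s < t).ne'
  · refine continuousOn_id.rpow_const fun s hs => Or.inl ?_
    rw [uIcc_of_le (by linarith)] at hs
    exact (by linarith [hs.1] : (0:ℝ) < s).ne'

theorem integral_rpow_mul_sub_rpow {t u v : ℝ} (ht : 0 < t) (hu : 0 < u) (hv : 0 < v) :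
    ∫ s in (0 : ℝ)..t, s ^ (u - 1) * (t - s) ^ (v - 1)
      = Gamma u * Gamma v / Gamma (u + v) * t ^ (u + v - 1) := by
  have hcomplex := Complex.betaIntegral_scaled u v ht
  rw [Complex.betaIntegral_eq_Gamma_mul_div _ _ (by simpa using hu) (by simpa using hv)] at hcomplex
  have hcast : ∀ s ∈ uIcc 0 t, (((s ^ (u - 1) * (t - s) ^ (v - 1) : ℝ)) : ℂ)
      = (s : ℂ) ^ ((u : ℂ) - 1) * ((t : ℂ) - s) ^ ((v : ℂ) - 1) := by
    intro s hs
    rw [uIcc_of_le ht.le] at hs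
    push_cast [Complex.ofReal_cpow hs.1, Complex.ofReal_cpow (sub_nonneg.2 hs.2)]
    rfl
  apply Complex.ofReal_injective
  rw [← intervalIntegral.integral_ofReal, intervalIntegral.integral_congr hcast, hcomplex]
  push_cast [Complex.ofReal_cpow ht.le, ← Complex.Gamma_ofReal]
  ring

theorem integral_comp_sub_mul_comm (f h : ℝ → ℝ) (t : ℝ) :
    ∫ s in (0 : ℝ)..t, f (t - s) * h s = ∫ s in (0 : ℝ)..t, h (t - s) * f s := by
  simpa [mul_comm] using
    intervalIntegral.integral_comp_sub_left (fun s => h (t - s) * f s) (a := 0) (b := t) t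

noncomputable def riemannLiouvilleKernel (β t : ℝ) : ℝ := t ^ (β - 1) / Gamma β

local notation "g" => riemannLiouvilleKernel

namespace riemannLiouvilleKernel

theorem nonneg {β t : ℝ} (hβ : 0 < β) (ht : 0 ≤ t) : 0 ≤ g β t :=
  div_nonneg (rpow_nonneg ht _) (Gamma_pos_of_pos hβ).le

@[simp] theorem one_left (t : ℝ) : g 1 t = 1 := by simp [riemannLiouvilleKernel]

theorem summable_pow_mul {α t : ℝ} (hα : α ∈ Ioc 0 1) (ht : 0 < t)
    (β x : ℝ) : Summable fun n : ℕ => x ^ n * g (n * α + β) t := by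
  refine ((summable_pow_div_Gamma_mul_add hα β (x * t ^ α)).mul_left (t ^ (β - 1))).congr
    fun n => ?_
  rw [riemannLiouvilleKernel, show (n : ℝ) * α + β - 1 = n * α + (β - 1) by ring,
    rpow_add ht, mul_comm (n : ℝ), rpow_mul ht.le, rpow_natCast]
  ring

theorem comp_sub_mul_eq (t u v s : ℝ) :
    g u (t - s) * g v s = (Gamma u * Gamma v)⁻¹ * (s ^ (v - 1) * (t - s) ^ (u - 1)) := by
  simp only [riemannLiouvilleKernel]; ring

theorem intervalIntegrable_conv {t u v : ℝ} (ht : 0 < t) (hu : 0 < u) (hv : 0 < v) :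
    IntervalIntegrable (fun s => g u (t - s) * g v s) volume 0 t := by
  simpa only [comp_sub_mul_eq t u v] using
    (intervalIntegrable_rpow_mul_sub_rpow ht hv hu).const_mul _

theorem integral_conv {t u v : ℝ} (ht : 0 < t) (hu : 0 < u) (hv : 0 < v) :
    ∫ s in (0 : ℝ)..t, g u (t - s) * g v s = g (u + v) t := by
  have := Gamma_pos_of_pos hu
  have := Gamma_pos_of_pos hv
  rw [intervalIntegral.integral_congr fun s _ => comp_sub_mul_eq t u v s,
    intervalIntegral.integral_const_mul, integral_rpow_mul_sub_rpow ht hv hu,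
    riemannLiouvilleKernel, add_comm v u]
  field_simp

section Series

variable {a β : ℕ → ℝ} {γ t : ℝ}

theorem integrableOn_conv_const_mul (ht : 0 < t) (hγ : 0 < γ) (hβ : ∀ n, 0 < β n) (n : ℕ) :
    IntegrableOn (fun s => g γ (t - s) * (a n * g (β n) s)) (Ioc 0 t) := by
  simpa only [mul_left_comm (a n)] using (intervalIntegrable_iff_integrableOn_Ioc_of_le ht.le).1
    ((intervalIntegrable_conv ht hγ (hβ n)).const_mul (a n))

theorem integral_norm_conv_const_mul (ht : 0 < t) (hγ : 0 < γ) (hβ : ∀ n, 0 < β n) (n : ℕ) :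
    ∫ s in Ioc 0 t, ‖g γ (t - s) * (a n * g (β n) s)‖ = |a n| * g (γ + β n) t := by
  have hnorm : ∀ s ∈ Ioc 0 t, ‖g γ (t - s) * (a n * g (β n) s)‖
      = |a n| * (g γ (t - s) * g (β n) s) := fun s hs => by
    rw [norm_mul, norm_mul, norm_of_nonneg (nonneg hγ (sub_nonneg.2 hs.2)),
      norm_of_nonneg (nonneg (hβ n) hs.1.le), norm_eq_abs, mul_left_comm]
  rw [setIntegral_congr_fun measurableSet_Ioc hnorm, integral_const_mul,
    ← intervalIntegral.integral_of_le ht.le, integral_conv ht hγ (hβ n)]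

theorem integral_conv_tsum (ht : 0 < t) (hγ : 0 < γ) (hβ : ∀ n, 0 < β n)
    (hsum : Summable fun n => |a n| * g (γ + β n) t) :
    ∫ s in (0 : ℝ)..t, g γ (t - s) * ∑' n, a n * g (β n) s = ∑' n, a n * g (γ + β n) t := by
  calc ∫ s in (0 : ℝ)..t, g γ (t - s) * ∑' n, a n * g (β n) s
      = ∫ s in Ioc 0 t, ∑' n, g γ (t - s) * (a n * g (β n) s) := by
        simp only [intervalIntegral.integral_of_le ht.le, tsum_mul_left]
    _ = ∑' n, ∫ s in Ioc 0 t, g γ (t - s) * (a n * g (β n) s) :=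
        (integral_tsum_of_summable_integral_norm (integrableOn_conv_const_mul ht hγ hβ)
          (hsum.congr fun n => (integral_norm_conv_const_mul ht hγ hβ n).symm)).symm
    _ = ∑' n, a n * g (γ + β n) t := by
        congr 1 with n
        rw [← intervalIntegral.integral_of_le ht.le]
        simp only [mul_left_comm _ (a n), intervalIntegral.integral_const_mul,
          integral_conv ht hγ (hβ n)]

theorem integrableOn_tsum (ht : 0 < t) (hβ : ∀ n, 0 < β n)
    (hsum : Summable fun n => |a n| * g (1 + β n) t) :
    IntegrableOn (fun s => ∑' n, a n * g (β n) s) (Ioc 0 t) := by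
  simpa only [one_left, one_mul, IntegrableOn] using integrable_tsum_of_summable_integral_norm
    (integrableOn_conv_const_mul ht one_pos hβ)
    (hsum.congr fun n => (integral_norm_conv_const_mul ht one_pos hβ n).symm)

end Series

section Resolvent

variable {α t : ℝ}

theorem summable_resolvent_majorant (hα : α ∈ Ioc 0 1) (ht : 0 < t) (c γ : ℝ) :
    Summable fun n : ℕ => |(-1) ^ n * c ^ (n + 1)| * g (γ + (n + 1) * α) t :=
  ((summable_pow_mul hα ht (γ + α) |c|).mul_left |c|).congr fun n => by
    simp only [abs_mul, abs_pow, abs_neg, abs_one, one_pow, one_mul]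
    rw [show γ + ((n : ℝ) + 1) * α = n * α + (γ + α) by ring]
    ring

theorem tsum_resolvent_eq_sub {c : ℝ}
    (hsum : Summable fun n : ℕ => (-1) ^ n * c ^ (n + 1) * g ((n + 1) * α) t) :
    ∑' n : ℕ, (-1) ^ n * c ^ (n + 1) * g ((n + 1) * α) t
      = c * g α t - c * ∑' n : ℕ, (-1) ^ n * c ^ (n + 1) * g (α + (n + 1) * α) t := by
  have hshift : ∀ n : ℕ, (-1) ^ (n + 1) * c ^ (n + 1 + 1) * g (((n + 1 : ℕ) + 1) * α) t
      = -(c * ((-1) ^ n * c ^ (n + 1) * g (α + (n + 1) * α) t)) := fun n => by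
    rw [Nat.cast_succ, show ((n : ℝ) + 1 + 1) * α = α + (n + 1) * α by ring]
    ring
  rw [hsum.tsum_eq_zero_add, ← tsum_mul_left, tsum_congr hshift, tsum_neg]
  simp only [pow_zero, zero_add, one_mul, pow_one, Nat.cast_zero]
  ring

end Resolvent

end riemannLiouvilleKernel

open riemannLiouvilleKernel in
/-- The Mittag--Leffler-type kernel
`R(t) = Σ_{n≥0} (-1)^n c^(n+1) t^((n+1)α - 1) / Γ((n+1)α) = c t^(α-1) E_{α,α}(-c t^α)`
is the resolvent of the second kind of the fractional kernel `K(t) = c t^(α-1)/Γ(α)`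
for `α ∈ (0,1]` and `c ∈ ℝ`: the series converges absolutely for every `t > 0`,
`R ∈ L¹_loc(ℝ₊)`, and `K*R = R*K = K - R` on `(0,∞)`. -/
theorem fractional_resolvent_second_kind (α c : ℝ) (hα : α ∈ Set.Ioc (0:ℝ) 1) :
    (∀ t : ℝ, 0 < t → Summable (fun n : ℕ =>
      |(-1) ^ n * c ^ (n + 1) * t ^ (((n : ℝ) + 1) * α - 1) / Real.Gamma (((n : ℝ) + 1) * α)|)) ∧
    (∀ T : ℝ, 0 < T → IntegrableOn (fun t : ℝ => ∑' n : ℕ,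
      (-1) ^ n * c ^ (n + 1) * t ^ (((n : ℝ) + 1) * α - 1) / Real.Gamma (((n : ℝ) + 1) * α))
      (Set.Ioc 0 T)) ∧
    (∀ t : ℝ, 0 < t →
      (∫ s in (0:ℝ)..t, (c * (t - s) ^ (α - 1) / Real.Gamma α) *
          (∑' n : ℕ, (-1) ^ n * c ^ (n + 1) * s ^ (((n : ℝ) + 1) * α - 1) /
            Real.Gamma (((n : ℝ) + 1) * α)))
        = c * t ^ (α - 1) / Real.Gamma α
          - (∑' n : ℕ, (-1) ^ n * c ^ (n + 1) * t ^ (((n : ℝ) + 1) * α - 1) /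
              Real.Gamma (((n : ℝ) + 1) * α)) ∧
      (∫ s in (0:ℝ)..t, (∑' n : ℕ, (-1) ^ n * c ^ (n + 1) * (t - s) ^ (((n : ℝ) + 1) * α - 1) /
            Real.Gamma (((n : ℝ) + 1) * α)) * (c * s ^ (α - 1) / Real.Gamma α))
        = c * t ^ (α - 1) / Real.Gamma α
          - (∑' n : ℕ, (-1) ^ n * c ^ (n + 1) * t ^ (((n : ℝ) + 1) * α - 1) /
              Real.Gamma (((n : ℝ) + 1) * α))) := by
  have hterm : ∀ (n : ℕ) (t : ℝ), (-1) ^ n * c ^ (n + 1) * t ^ (((n : ℝ) + 1) * α - 1) /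
      Gamma (((n : ℝ) + 1) * α) = (-1) ^ n * c ^ (n + 1) * g ((n + 1) * α) t :=
    fun _ _ => mul_div_assoc _ _ _
  have hK : ∀ t, c * t ^ (α - 1) / Gamma α = c * g α t := fun _ => mul_div_assoc _ _ _
  simp only [hterm, hK]
  have hexp : ∀ n : ℕ, 0 < ((n : ℝ) + 1) * α := fun n => mul_pos (by positivity) hα.1
  have habs : ∀ t, 0 < t → Summable fun n : ℕ => |(-1) ^ n * c ^ (n + 1) * g ((n + 1) * α) t| :=
    fun t ht => by
      simpa only [zero_add, abs_mul, abs_of_nonneg (nonneg (hexp _) ht.le)] using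
        summable_resolvent_majorant hα ht c 0
  refine ⟨habs, fun T hT => integrableOn_tsum hT hexp (summable_resolvent_majorant hα hT c 1),
    fun t ht => ?_⟩
  have hKR : ∫ s in (0 : ℝ)..t,
        c * g α (t - s) * ∑' n : ℕ, (-1) ^ n * c ^ (n + 1) * g ((n + 1) * α) s
      = c * g α t - ∑' n : ℕ, (-1) ^ n * c ^ (n + 1) * g ((n + 1) * α) t := by
    rw [tsum_resolvent_eq_sub (habs t ht).of_abs, sub_sub_cancel,
      ← integral_conv_tsum ht hα.1 hexp (summable_resolvent_majorant hα ht c α),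
      ← intervalIntegral.integral_const_mul]
    simp only [mul_assoc]
  refine ⟨hKR, hKR ▸ integral_comp_sub_mul_comm
    (fun s => ∑' n : ℕ, (-1) ^ n * c ^ (n + 1) * g ((n + 1) * α) s) (fun s => c * g α s) t⟩
end

section
/- Let K be a scalar kernel in L¹_loc(ℝ₊, ℝ) that satisfies condition (★), with resolvent of the first kind L. Then for every h ≥ 0 the function t ↦ (Δ_hK*L)(t) = ∫_{[0,t]} K(t+h−s) L(ds) is non-decreasing on ℝ₊ and takes values in [0,1]. -/
/-!
Splitting the resolvent identity at `t + h` gives `(Δ_h K * L)(t) = 1 - R(t)` with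
`R(t) = ∫_{(t, t+h]} K(t + h - s) L(ds) ≥ 0`. By the layer-cake formula, `R(t)` integrates over
`c > 0` the `L`-masses of the translates `t + S_c` of `S_c = {u ∈ (0, h] | c < K(h - u)}`.
Since `K` is non-increasing on `(0, ∞)`, every `S_c` is order-connected, so by inner regularity
the mass of `t + S_c` is approximated by masses of closed intervals `t + [x, y] ⊆ t + S_c`,
which do not increase with `t` because `L` is non-increasing.
-/

open MeasureTheory Set
open scoped ENNReal

theorem integral_le_integral_of_forall_measure_lt_le {α β : Type*} [MeasurableSpace α]
    [MeasurableSpace β] {μ : Measure α} {ν : Measure β} {f : α → ℝ} {g : β → ℝ}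
    (hf : 0 ≤ᵐ[μ] f) (hfm : AEStronglyMeasurable f μ) (hg : 0 ≤ᵐ[ν] g) (hgi : Integrable g ν)
    (hfg : ∀ c > 0, μ {x | c < f x} ≤ ν {x | c < g x}) :
    ∫ x, f x ∂μ ≤ ∫ x, g x ∂ν := by
  rw [integral_eq_lintegral_of_nonneg_ae hf hfm, integral_eq_lintegral_of_nonneg_ae hg hgi.1]
  refine ENNReal.toReal_mono hgi.lintegral_lt_top.ne ?_
  rw [lintegral_eq_lintegral_meas_lt μ hf hfm.aemeasurable,
    lintegral_eq_lintegral_meas_lt ν hg hgi.1.aemeasurable]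
  exact setLIntegral_mono' measurableSet_Ioi hfg

theorem ordConnected_Ioc_inter_setOf_lt {α β : Type*} [LinearOrder α] [Preorder β] {g : α → β}
    {a b : α} (hg : MonotoneOn g (Ioo a b)) (c : β) :
    (Ioc a b ∩ {u | c < g u}).OrdConnected := by
  refine ⟨fun u ⟨hu, hcu⟩ w ⟨hw, hcw⟩ v ⟨huv, hvw⟩ => ?_⟩
  rcases huv.eq_or_lt with rfl | huv
  · exact ⟨hu, hcu⟩
  rcases hvw.eq_or_lt with rfl | hvw
  · exact ⟨hw, hcw⟩
  exact ⟨⟨hu.1.trans huv, hvw.le.trans hw.2⟩,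
    hcu.trans_le (hg ⟨hu.1, huv.trans (hvw.trans_le hw.2)⟩ ⟨hu.1.trans huv, hvw.trans_le hw.2⟩
      huv.le)⟩

theorem setIntegral_Icc_add_setIntegral_Ioc {E : Type*} [NormedAddCommGroup E] [NormedSpace ℝ E]
    {μ : Measure ℝ} {f : ℝ → E} {a b c : ℝ} (hab : a ≤ b) (hbc : b ≤ c)
    (hf : IntegrableOn f (Icc a c) μ) :
    ∫ x in Icc a b, f x ∂μ + ∫ x in Ioc b c, f x ∂μ = ∫ x in Icc a c, f x ∂μ := by
  rw [← setIntegral_union (disjoint_left.2 fun x hx hx' => hx'.1.not_ge hx.2) measurableSet_Ioc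
    (hf.mono_set (Icc_subset_Icc_right hbc))
    (hf.mono_set (Ioc_subset_Icc_self.trans (Icc_subset_Icc_left hab))),
    Icc_union_Ioc_eq_Icc hab hbc]

def ShiftAntitone (L : Measure ℝ) : Prop :=
  ∀ t ≥ (0:ℝ), ∀ s₁ s₂ : ℝ, 0 ≤ s₁ → s₁ ≤ s₂ → L (Icc s₂ (s₂ + t)) ≤ L (Icc s₁ (s₁ + t))

theorem ShiftAntitone.measure_preimage_sub_le {L : Measure ℝ} (hL : ShiftAntitone L)
    {S : Set ℝ} (hS : S.OrdConnected) (hS₀ : S ⊆ Ici 0) {t₁ t₂ : ℝ} (ht₁ : 0 ≤ t₁)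
    (ht : t₁ ≤ t₂) (hfin : L ((· - t₂) ⁻¹' S) ≠ ∞) :
    L ((· - t₂) ⁻¹' S) ≤ L ((· - t₁) ⁻¹' S) := by
  -- A compact `C ⊆ t₂ + S` lies in the interval `[inf C, sup C] ⊆ t₂ + S`, whose translate by
  -- `t₁ - t₂` is no lighter and still lies in `t₁ + S`.
  set A := (· - t₂) ⁻¹' S
  have : IsFiniteMeasure (L.restrict A) := isFiniteMeasure_restrict.mpr hfin
  refine le_of_forall_lt fun r hr => ?_
  rw [← Measure.restrict_apply_self] at hr
  have hA : MeasurableSet A := hS.measurableSet.preimage (measurable_sub_const t₂)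
  obtain ⟨C, hCA, hC, hrC⟩ := hA.exists_lt_isCompact_of_ne_top (measure_ne_top _ _) hr
  have hCne : C.Nonempty := nonempty_iff_ne_empty.mpr fun h => by simp [h] at hrC
  set x := sInf C
  set y := sSup C
  have hx : x - t₂ ∈ S := hCA (hC.sInf_mem hCne)
  have hy : y - t₂ ∈ S := hCA (hC.sSup_mem hCne)
  have hxy : x ≤ y := csInf_le_csSup hCne hC.bddBelow hC.bddAbove
  have hx₀ : 0 ≤ x - t₂ := hS₀ hx
  calc r < L.restrict A C := hrC
    _ ≤ L (Icc x y) := (Measure.restrict_apply_le _ _).trans <|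
      measure_mono fun z hz => ⟨csInf_le hC.bddBelow hz, le_csSup hC.bddAbove hz⟩
    _ = L (Icc x (x + (y - x))) := by rw [add_sub_cancel]
    _ ≤ L (Icc (x - t₂ + t₁) (x - t₂ + t₁ + (y - x))) :=
      hL _ (sub_nonneg.2 hxy) _ _ (by linarith) (by linarith)
    _ ≤ L ((· - t₁) ⁻¹' S) := measure_mono fun z hz =>
      hS.out hx hy ⟨by linarith [hz.1], by linarith [hz.2]⟩

theorem ShiftAntitone.setIntegral_Ioc_le {L : Measure ℝ} (hL : ShiftAntitone L) {K : ℝ → ℝ}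
    (hK : AntitoneOn K (Ioi 0)) (hK₀ : ∀ x, 0 ≤ x → 0 ≤ K x) {h t₁ t₂ : ℝ}
    (hi₁ : IntegrableOn (fun s => K (t₁ + h - s)) (Ioc t₁ (t₁ + h)) L)
    (hi₂ : IntegrableOn (fun s => K (t₂ + h - s)) (Ioc t₂ (t₂ + h)) L)
    (ht₁ : 0 ≤ t₁) (ht : t₁ ≤ t₂) :
    ∫ s in Ioc t₂ (t₂ + h), K (t₂ + h - s) ∂L ≤ ∫ s in Ioc t₁ (t₁ + h), K (t₁ + h - s) ∂L := by
  have hnonneg : ∀ t, 0 ≤ᵐ[L.restrict (Ioc t (t + h))] fun s => K (t + h - s) := fun t =>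
    ae_restrict_of_forall_mem measurableSet_Ioc fun s hs => hK₀ _ (by linarith [hs.2])
  have hsuper : ∀ t c, L.restrict (Ioc t (t + h)) {s | c < K (t + h - s)} =
      L ((· - t) ⁻¹' (Ioc 0 h ∩ {u | c < K (h - u)})) := fun t c => by
    rw [Measure.restrict_apply' measurableSet_Ioc, preimage_inter, preimage_sub_const_Ioc,
      zero_add, add_comm h, inter_comm]
    congr 2
    ext s
    simp only [mem_ofPred_eq, mem_preimage, sub_sub_eq_add_sub, add_comm h t]
  refine integral_le_integral_of_forall_measure_lt_le (hnonneg t₂) hi₂.1 (hnonneg t₁) hi₁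
    fun c hc => ?_
  rw [hsuper, hsuper]
  have hmono : MonotoneOn (fun u => K (h - u)) (Ioo 0 h) := fun u hu v hv huv =>
    hK (by simp only [mem_Ioi]; linarith [hv.2]) (by simp only [mem_Ioi]; linarith [hu.2])
      (by linarith)
  refine hL.measure_preimage_sub_le (ordConnected_Ioc_inter_setOf_lt hmono c)
    (fun u hu => hu.1.1.le) ht₁ ht ?_
  rw [← hsuper]
  exact (hi₂.measure_gt_lt_top hc).ne

theorem shifted_kernel_conv_resolvent_general (K : ℝ → ℝ)
    (hKpos : ∀ t > (0:ℝ), 0 ≤ K t)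
    (hKmono : AntitoneOn K (Set.Ioi 0))
    (L : Measure ℝ)
    (hres : ∀ t ≥ (0:ℝ), (∫ s in Set.Icc 0 t, K (t - s) ∂L) = 1)
    (hLmono : ∀ t ≥ (0:ℝ), ∀ s₁ s₂ : ℝ, 0 ≤ s₁ → s₁ ≤ s₂ →
      L (Set.Icc s₂ (s₂ + t)) ≤ L (Set.Icc s₁ (s₁ + t)))
    (h : ℝ) (hh : 0 ≤ h) :
    (∀ t₁ t₂ : ℝ, 0 ≤ t₁ → t₁ ≤ t₂ →
      (∫ s in Set.Icc 0 t₁, K (t₁ + h - s) ∂L) ≤ ∫ s in Set.Icc 0 t₂, K (t₂ + h - s) ∂L) ∧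
    (∀ t : ℝ, 0 ≤ t → (∫ s in Set.Icc 0 t, K (t + h - s) ∂L) ∈ Set.Icc (0:ℝ) 1) := by
  have hK₀ : ∀ x, 0 ≤ x → 0 ≤ K x := by
    intro x hx
    rcases hx.eq_or_lt with rfl | hx
    · -- `(★)` says nothing about `K 0`; the resolvent identity at `0` reads `L {0} * K 0 = 1`.
      have h₀ := hres 0 le_rfl
      rw [Icc_self, Measure.restrict_singleton, integral_smul_measure, integral_dirac, sub_zero,
        smul_eq_mul] at h₀
      exact (pos_of_mul_pos_right (h₀ ▸ one_pos) ENNReal.toReal_nonneg).le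
    · exact hKpos x hx
  have hint : ∀ t, 0 ≤ t → IntegrableOn (fun s => K (t + h - s)) (Icc 0 (t + h)) L :=
    fun t ht => integrable_of_integral_eq_one (hres _ (by linarith))
  have htail : ∀ t, 0 ≤ t → IntegrableOn (fun s => K (t + h - s)) (Ioc t (t + h)) L :=
    fun t ht => (hint t ht).mono_set (Ioc_subset_Icc_self.trans (Icc_subset_Icc_left ht))
  have hsplit : ∀ t, 0 ≤ t →
      (∫ s in Icc 0 t, K (t + h - s) ∂L) + ∫ s in Ioc t (t + h), K (t + h - s) ∂L = 1 :=
    fun t ht => (setIntegral_Icc_add_setIntegral_Ioc ht (by linarith) (hint t ht)).trans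
      (hres _ (by linarith))
  refine ⟨fun t₁ t₂ ht₁ ht => ?_, fun t ht => ⟨?_, ?_⟩⟩
  · have := ShiftAntitone.setIntegral_Ioc_le hLmono hKmono hK₀ (htail t₁ ht₁)
      (htail t₂ (ht₁.trans ht)) ht₁ ht
    linarith [hsplit t₁ ht₁, hsplit t₂ (ht₁.trans ht)]
  · exact setIntegral_nonneg measurableSet_Icc fun s hs => hK₀ _ (by linarith [hs.2])
  · have : 0 ≤ ∫ s in Ioc t (t + h), K (t + h - s) ∂L :=
      setIntegral_nonneg measurableSet_Ioc fun s hs => hK₀ _ (by linarith [hs.2])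
    linarith [hsplit t ht]

/-- If the scalar kernel `K` satisfies condition (★) with resolvent of the first kind `L`,
then for every `h ≥ 0` the function `t ↦ (Δ_h K * L)(t) = ∫_{[0,t]} K(t+h-s) L(ds)` is
non-decreasing on `ℝ₊` and takes values in `[0,1]`. -/
theorem shifted_kernel_conv_resolvent (K : ℝ → ℝ)
    (hKloc : ∀ T : ℝ, 0 < T → IntegrableOn K (Set.Ioc 0 T))
    (hKpos : ∀ t > (0:ℝ), 0 ≤ K t) (hKnz : ∃ t > (0:ℝ), K t ≠ 0)
    (hKmono : AntitoneOn K (Set.Ioi 0)) (hKcont : ContinuousOn K (Set.Ioi 0))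
    (L : Measure ℝ) (hLfin : ∀ T > (0:ℝ), L (Set.Icc 0 T) < ⊤)
    (hres : ∀ t ≥ (0:ℝ), (∫ s in Set.Icc 0 t, K (t - s) ∂L) = 1)
    (hLmono : ∀ t ≥ (0:ℝ), ∀ s₁ s₂ : ℝ, 0 ≤ s₁ → s₁ ≤ s₂ →
      L (Set.Icc s₂ (s₂ + t)) ≤ L (Set.Icc s₁ (s₁ + t)))
    (h : ℝ) (hh : 0 ≤ h) :
    (∀ t₁ t₂ : ℝ, 0 ≤ t₁ → t₁ ≤ t₂ →
      (∫ s in Set.Icc 0 t₁, K (t₁ + h - s) ∂L) ≤ ∫ s in Set.Icc 0 t₂, K (t₂ + h - s) ∂L) ∧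
    (∀ t : ℝ, 0 ≤ t → (∫ s in Set.Icc 0 t, K (t + h - s) ∂L) ∈ Set.Icc (0:ℝ) 1) :=
  shifted_kernel_conv_resolvent_general K hKpos hKmono L hres hLmono h hh
end
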